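/- arXiv:0712.1321 — 6 statements merged into one kernel-verified Lean document; each statement's English description precedes it below -/
import Mathlib

section
/- Let J ⊆ ℝ be an interval, C > 0, and let θ : J → ℝ be differentiable with θ'(t) ≤ −θ(t)²/C on J. If t₁ ∈ J and θ(t₁) < 0, then for all t ∈ J with t₁ ≤ t < t₁ − C/θ(t₁) one has θ(t) ≤ C/(t − t₁ + C/θ(t₁)), and consequently J cannot contain the point t₁ − C/θ(t₁). -/
open Set

/-- Proposition 3.3 (negative initial value half): θ' ≤ −θ²/C with θ(t₁) < 0
gives θ(t) ≤ C/(t − t₁ + C/θ(t₁)) for t₁ ≤ t in J, and J cannot contain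
the point t₁ − C/θ(t₁). -/
theorem stmt_3 (J : Set ℝ) (hJ : J.OrdConnected) (θ θ' : ℝ → ℝ) (C : ℝ) (hC : 0 < C)
    (hderiv : ∀ t ∈ J, HasDerivAt θ (θ' t) t)
    (hriccati : ∀ t ∈ J, θ' t ≤ -θ t ^ 2 / C)
    (t₁ : ℝ) (ht₁ : t₁ ∈ J) (hneg : θ t₁ < 0) :
    (∀ t ∈ J, t₁ ≤ t → t < t₁ - C / θ t₁ → θ t ≤ C / (t - t₁ + C / θ t₁)) ∧
    t₁ - C / θ t₁ ∉ J := by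
  have hJconv : Convex ℝ J := hJ.convex
  -- θ is antitone on J
  have hanti : AntitoneOn θ J := by
    apply antitoneOn_of_deriv_nonpos hJconv
    · exact fun t ht => (hderiv t ht).continuousAt.continuousWithinAt
    · exact fun t ht =>
        ((hderiv t (interior_subset ht)).differentiableAt).differentiableWithinAt
    · intro x hx
      have hxJ := interior_subset hx
      rw [(hderiv x hxJ).deriv]
      have := hriccati x hxJ
      have : -θ x ^ 2 / C ≤ 0 := div_nonpos_of_nonpos_of_nonneg (neg_nonpos.2 (sq_nonneg _)) hC.le
      linarith [hriccati x hxJ]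
  have hθneg : ∀ t ∈ J, t₁ ≤ t → θ t < 0 :=
    fun t ht h => lt_of_le_of_lt (hanti ht₁ ht h) hneg
  -- the set S = J ∩ [t₁, ∞)
  set S : Set ℝ := J ∩ Set.Ici t₁ with hS
  have hSconv : Convex ℝ S := hJconv.inter (convex_Ici t₁)
  have hθS : ∀ t ∈ S, θ t < 0 := fun t ht => hθneg t ht.1 ht.2
  -- h = C/θ - id is monotone on S
  have hder : ∀ t ∈ S, HasDerivAt (fun s => C / θ s - s)
      ((0 * θ t - C * θ' t) / θ t ^ 2 - 1) t := by
    intro t ht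
    exact ((hasDerivAt_const t C).div (hderiv t ht.1) (hθS t ht).ne).sub (hasDerivAt_id t)
  have hmono : MonotoneOn (fun s => C / θ s - s) S := by
    apply monotoneOn_of_deriv_nonneg hSconv
    · exact fun t ht => (hder t ht).continuousAt.continuousWithinAt
    · exact fun t ht =>
        ((hder t (interior_subset ht)).differentiableAt).differentiableWithinAt
    · intro x hx
      have hxS := interior_subset hx
      rw [(hder x hxS).deriv]
      have hθx : θ x < 0 := hθS x hxS
      have hsq : 0 < θ x ^ 2 := pow_two_pos_of_ne_zero hθx.ne
      have h1 : C * θ' x ≤ -θ x ^ 2 := by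
        have := hriccati x hxS.1
        calc C * θ' x ≤ C * (-θ x ^ 2 / C) := by
              exact mul_le_mul_of_nonneg_left this hC.le
          _ = -θ x ^ 2 := by field_simp
      have h2 : (1 : ℝ) ≤ (0 * θ x - C * θ' x) / θ x ^ 2 := by
        rw [le_div_iff₀ hsq]
        nlinarith
      linarith
  -- key inequality: t - t₁ + C/θ t₁ ≤ C/θ t for t ∈ J, t₁ ≤ t
  have key : ∀ t ∈ J, t₁ ≤ t → t - t₁ + C / θ t₁ ≤ C / θ t := by
    intro t ht hle
    have h1 : C / θ t₁ - t₁ ≤ C / θ t - t :=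
      hmono ⟨ht₁, le_refl t₁⟩ ⟨ht, hle⟩ hle
    linarith
  constructor
  · intro t ht hle hlt
    have hD : t - t₁ + C / θ t₁ < 0 := by linarith
    have hθt : θ t < 0 := hθneg t ht hle
    have hk := key t ht hle
    -- from hk and θ t < 0: C ≤ (t - t₁ + C/θ t₁) * θ t
    have h3 : C ≤ (t - t₁ + C / θ t₁) * θ t := by
      have := mul_le_mul_of_nonpos_right hk (le_of_lt hθt)
      rwa [div_mul_cancel₀ C hθt.ne] at this
    rw [le_div_iff_of_neg hD]
    linarith [h3]
  · intro hmem
    have hle : t₁ ≤ t₁ - C / θ t₁ := by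
      have : C / θ t₁ < 0 := div_neg_of_pos_of_neg hC hneg
      linarith
    have hk := key _ hmem hle
    have hθt : θ (t₁ - C / θ t₁) < 0 := hθneg _ hmem hle
    have : C / θ (t₁ - C / θ t₁) < 0 := div_neg_of_pos_of_neg hC hθt
    have h0 : (t₁ - C / θ t₁) - t₁ + C / θ t₁ = 0 := by ring
    rw [h0] at hk
    linarith
end

section
/- Let θ : J → ℝ be differentiable on an interval J, satisfying θ' ≤ 0 and θ'(t) ≤ −θ(t)²/(n−1) − 2θ(t)·g'(t)/(n−1) on J, where g : J → ℝ is differentiable with g ≤ k for a constant k, and n ≥ 2. If t₁ ∈ J with θ(t₁) < 0, then J does not contain the point t₁ + σ where σ = (n − 1 + 2k − 2g(t₁))/(−θ(t₁)). -/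
open Set

/-! Write `A = n - 1 + 2k - 2g ≥ n - 1 > 0`. On `[t₁, t₁ + σ]` the function `θ` is antitone, hence
negative, and the Riccati inequality together with `(k - g) θ' ≤ 0` gives `θ² ≤ -2g'θ - Aθ'`,
i.e. `A / θ - t` is monotone. At `t₁` this function equals `-(t₁ + σ)`, so at `t₁ + σ` we would get
`A / θ ≥ 0`, which is impossible since `A > 0 > θ`. -/

theorem Convex.monotoneOn_of_hasDerivAt_nonneg {D : Set ℝ} (hD : Convex ℝ D) {f f' : ℝ → ℝ}
    (hf : ∀ x ∈ D, HasDerivAt f (f' x) x) (hf' : ∀ x ∈ D, 0 ≤ f' x) : MonotoneOn f D :=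
  monotoneOn_of_hasDerivWithinAt_nonneg hD (fun x hx ↦ (hf x hx).continuousAt.continuousWithinAt)
    (fun x hx ↦ (hf x (interior_subset hx)).hasDerivWithinAt) fun x hx ↦ hf' x (interior_subset hx)

theorem Convex.antitoneOn_of_hasDerivAt_nonpos {D : Set ℝ} (hD : Convex ℝ D) {f f' : ℝ → ℝ}
    (hf : ∀ x ∈ D, HasDerivAt f (f' x) x) (hf' : ∀ x ∈ D, f' x ≤ 0) : AntitoneOn f D :=
  antitoneOn_of_hasDerivWithinAt_nonpos hD (fun x hx ↦ (hf x hx).continuousAt.continuousWithinAt)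
    (fun x hx ↦ (hf x (interior_subset hx)).hasDerivWithinAt) fun x hx ↦ hf' x (interior_subset hx)

theorem sq_le_of_le_riccati {N k θ θ' g g' : ℝ} (hN : 0 < N) (hθ' : θ' ≤ 0) (hg : g ≤ k)
    (h : θ' ≤ -θ ^ 2 / N - 2 * θ * g' / N) :
    θ ^ 2 ≤ -(2 * g') * θ - (N + 2 * k - 2 * g) * θ' := by
  rw [← sub_div, le_div_iff₀ hN] at h
  linarith [mul_nonneg (sub_nonneg.2 hg) (neg_nonneg.2 hθ')]

theorem monotoneOn_div_sub_of_le_riccati {D : Set ℝ} (hD : Convex ℝ D) {θ θ' g g' : ℝ → ℝ}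
    {N k : ℝ} (hN : 0 < N) (hθ : ∀ t ∈ D, HasDerivAt θ (θ' t) t)
    (hg : ∀ t ∈ D, HasDerivAt g (g' t) t) (hmono : ∀ t ∈ D, θ' t ≤ 0)
    (hineq : ∀ t ∈ D, θ' t ≤ -θ t ^ 2 / N - 2 * θ t * g' t / N) (hgk : ∀ t ∈ D, g t ≤ k)
    (hneg : ∀ t ∈ D, θ t < 0) :
    MonotoneOn (fun s ↦ (N + 2 * k - 2 * g s) / θ s - s) D := by
  refine hD.monotoneOn_of_hasDerivAt_nonneg
    (f' := fun t ↦ (-(2 * g' t) * θ t - (N + 2 * k - 2 * g t) * θ' t) / θ t ^ 2 - 1)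
    (fun t ht ↦ ?_) fun t ht ↦ ?_
  · have hA : HasDerivAt (fun s ↦ N + 2 * k - 2 * g s) (-(2 * g' t)) t := by
      simpa using ((hg t ht).const_mul 2).const_sub (N + 2 * k)
    exact (hA.div (hθ t ht) (hneg t ht).ne).sub (hasDerivAt_id t)
  · rw [sub_nonneg, le_div_iff₀ (sq_pos_of_neg (hneg t ht)), one_mul]
    exact sq_le_of_le_riccati hN (hmono t ht) (hgk t ht) (hineq t ht)

/-- Proposition 3.4 (m = ∞ Raychaudhuri comparison): if θ' ≤ 0 and
θ' ≤ −θ²/(n−1) − 2θg'/(n−1) with g ≤ k, and θ(t₁) < 0, then J does not contain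
t₁ + σ where σ = (n − 1 + 2k − 2g(t₁))/(−θ(t₁)). -/
theorem stmt_4 (J : Set ℝ) (hJ : J.OrdConnected) (n : ℕ) (hn : 2 ≤ n)
    (θ θ' g g' : ℝ → ℝ) (k : ℝ)
    (hθ : ∀ t ∈ J, HasDerivAt θ (θ' t) t)
    (hg : ∀ t ∈ J, HasDerivAt g (g' t) t)
    (hmono : ∀ t ∈ J, θ' t ≤ 0)
    (hineq : ∀ t ∈ J,
      θ' t ≤ -θ t ^ 2 / ((n : ℝ) - 1) - 2 * θ t * g' t / ((n : ℝ) - 1))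
    (hgk : ∀ t ∈ J, g t ≤ k)
    (t₁ : ℝ) (ht₁ : t₁ ∈ J) (hneg : θ t₁ < 0) :
    t₁ + ((n : ℝ) - 1 + 2 * k - 2 * g t₁) / (-θ t₁) ∉ J := by
  intro ht₂
  set N : ℝ := (n : ℝ) - 1
  have hN : 1 ≤ N := by have : (2 : ℝ) ≤ n := mod_cast hn; linarith
  have hA (t : ℝ) (ht : t ∈ J) : 0 < N + 2 * k - 2 * g t := by linarith [hgk t ht]
  set t₂ := t₁ + (N + 2 * k - 2 * g t₁) / (-θ t₁)
  have ht₁₂ : t₁ ≤ t₂ := le_add_of_nonneg_right (div_pos (hA t₁ ht₁) (neg_pos.2 hneg)).le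
  have hI : Icc t₁ t₂ ⊆ J := hJ.out ht₁ ht₂
  have hθanti : AntitoneOn θ (Icc t₁ t₂) := (convex_Icc t₁ t₂).antitoneOn_of_hasDerivAt_nonpos
    (fun t ht ↦ hθ t (hI ht)) fun t ht ↦ hmono t (hI ht)
  have hθneg (t : ℝ) (ht : t ∈ Icc t₁ t₂) : θ t < 0 :=
    (hθanti (left_mem_Icc.2 ht₁₂) ht ht.1).trans_lt hneg
  have hφ := monotoneOn_div_sub_of_le_riccati (convex_Icc t₁ t₂) (by linarith)
    (fun t ht ↦ hθ t (hI ht)) (fun t ht ↦ hg t (hI ht)) (fun t ht ↦ hmono t (hI ht))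
    (fun t ht ↦ hineq t (hI ht)) (fun t ht ↦ hgk t (hI ht)) hθneg
    (left_mem_Icc.2 ht₁₂) (right_mem_Icc.2 ht₁₂) ht₁₂
  have hend : (N + 2 * k - 2 * g t₂) / θ t₂ < 0 :=
    div_neg_of_pos_of_neg (hA t₂ ht₂) (hθneg t₂ (right_mem_Icc.2 ht₁₂))
  simp only [div_neg, t₂] at hφ hend
  linarith
end

section
/- Let R : ℝ → Matrix (Fin k) (Fin k) ℝ be continuous and symmetric-valued, and let B : ℝ → Matrix (Fin k) (Fin k) ℝ be a differentiable symmetric-valued solution of the Riccati equation B' + B² + R = 0 on all of ℝ. If tr(R(t)) ≥ 0 for all t and tr(B(t₀)) ≠ 0 for some t₀, then B cannot be defined on all of ℝ; equivalently, if B is globally defined and symmetric with tr R ≥ 0, then tr B ≡ 0, B ≡ 0, and hence R ≡ 0. -/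
/-!
Taking traces in `B' + B² + R = 0` and using `(tr B)² ≤ k · tr (BᵀB) = k · tr B²` gives the scalar
Riccati inequality `k · (tr B)' ≤ -(tr B)²`. A solution `f` of `c f' ≤ -f²` (`c > 0`) that is
positive somewhere has `(c / f)' ≥ 1` as long as it stays positive, which it does backwards in time
since `f` is antitone; so `c / f` would reach `0` in finite backward time. Reversing time handles
negative values, so `tr B ≡ 0`, and then `tr B² = -tr R ≤ 0` forces `B ≡ 0`.
-/

open Matrix

section RiccatiInequality

variable {c : ℝ} {f f' : ℝ → ℝ}

theorem nonpos_of_mul_hasDerivAt_le_neg_sq (hc : 0 < c) (hf : ∀ t, HasDerivAt f (f' t) t)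
    (hle : ∀ t, c * f' t ≤ -f t ^ 2) (t₀ : ℝ) : f t₀ ≤ 0 := by
  by_contra! h₀
  have hanti : Antitone f := antitone_of_hasDerivAt_nonpos hf fun t => by
    show f' t ≤ 0; nlinarith [hle t, sq_nonneg (f t)]
  have hpos : ∀ t ≤ t₀, 0 < f t := fun t ht => h₀.trans_le (hanti ht)
  have hmono : MonotoneOn (fun t => c * (f t)⁻¹ - t) (Set.Iic t₀) := by
    refine monotoneOn_of_hasDerivWithinAt_nonneg (convex_Iic t₀)
      (f' := fun t => c * (-f' t / f t ^ 2) - 1) ?_ (fun t ht => ?_) (fun t ht => ?_)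
    · exact fun t ht => ((((hf t).inv (hpos t ht).ne').const_mul c).sub
        (hasDerivAt_id t)).continuousAt.continuousWithinAt
    · rw [interior_Iic] at ht
      exact (((hf t).inv (hpos t ht.le).ne').const_mul c).sub (hasDerivAt_id t)
        |>.hasDerivWithinAt
    · rw [interior_Iic] at ht
      have hft := hpos t ht.le
      rw [sub_nonneg, mul_div_assoc', le_div_iff₀ (by positivity)]
      linarith [hle t]
  set t₁ := t₀ - c * (f t₀)⁻¹ - 1
  have ht₁ : t₁ ≤ t₀ := by have := inv_pos.2 h₀; dsimp only [t₁]; nlinarith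
  have hstep := hmono ht₁ Set.self_mem_Iic ht₁
  have hinv₁ := mul_pos hc (inv_pos.2 (hpos t₁ ht₁))
  dsimp only [t₁] at *
  linarith

theorem eq_zero_of_mul_hasDerivAt_le_neg_sq (hc : 0 ≤ c) (hf : ∀ t, HasDerivAt f (f' t) t)
    (hle : ∀ t, c * f' t ≤ -f t ^ 2) (t : ℝ) : f t = 0 := by
  rcases hc.eq_or_lt with rfl | hc
  · exact pow_eq_zero_iff two_ne_zero |>.1 <| le_antisymm (by linarith [hle t]) (sq_nonneg _)
  have hreflect : ∀ s, HasDerivAt (fun s => -f (-s)) (f' (-s)) s := fun s => by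
    simpa using ((hf (-s)).comp s (hasDerivAt_neg s)).fun_neg
  have hge := nonpos_of_mul_hasDerivAt_le_neg_sq hc hreflect (fun s => by simpa using hle (-s)) (-t)
  have hle := nonpos_of_mul_hasDerivAt_le_neg_sq hc hf hle t
  simp only [neg_neg] at *
  linarith

end RiccatiInequality

section TransposeMulSelf

variable {m n R : Type*} [Fintype m] [Fintype n] [CommRing R] [LinearOrder R]
  [IsStrictOrderedRing R]

theorem Matrix.sum_diag_sq_le_trace_transpose_mul_self (A : Matrix n n R) :
    ∑ i, A i i ^ 2 ≤ (Aᵀ * A).trace := by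
  simp only [trace, diag, mul_apply, transpose_apply, ← sq]
  exact Finset.sum_le_sum fun i _ => Finset.single_le_sum (f := fun j => A j i ^ 2)
    (fun j _ => sq_nonneg _) (Finset.mem_univ i)

theorem Matrix.sq_trace_le_card_mul_trace_transpose_mul_self (A : Matrix n n R) :
    A.trace ^ 2 ≤ Fintype.card n * (Aᵀ * A).trace :=
  (sq_sum_le_card_mul_sum_sq (s := Finset.univ)).trans <|
    mul_le_mul_of_nonneg_left A.sum_diag_sq_le_trace_transpose_mul_self (Nat.cast_nonneg _)

theorem Matrix.trace_transpose_mul_self_nonneg (A : Matrix n n R) : 0 ≤ (Aᵀ * A).trace :=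
  (Finset.sum_nonneg fun i _ => sq_nonneg (A i i)).trans A.sum_diag_sq_le_trace_transpose_mul_self

theorem Matrix.trace_transpose_mul_self_eq_zero_iff {A : Matrix m n R} :
    (Aᵀ * A).trace = 0 ↔ A = 0 := by
  rw [← vec_dotProduct_vec, dotProduct_self_eq_zero, vec_eq_zero_iff]

end TransposeMulSelf

theorem Matrix.hasDerivAt_trace {n 𝕜 : Type*} [Fintype n] [NontriviallyNormedField 𝕜]
    {A : 𝕜 → Matrix n n 𝕜} {A' : Matrix n n 𝕜} {t : 𝕜}
    (hA : ∀ i, HasDerivAt (fun s => A s i i) (A' i i) t) :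
    HasDerivAt (fun s => (A s).trace) A'.trace t :=
  HasDerivAt.fun_sum fun i _ => hA i

theorem stmt_6_general (k : ℕ) (B B' R : ℝ → Matrix (Fin k) (Fin k) ℝ)
    (hB : ∀ t : ℝ, ∀ i j, HasDerivAt (fun s => B s i j) (B' t i j) t)
    (hBsym : ∀ t : ℝ, (B t)ᵀ = B t)
    (hode : ∀ t : ℝ, B' t + B t * B t + R t = 0)
    (htrR : ∀ t : ℝ, 0 ≤ (R t).trace) :
    (∀ t : ℝ, (B t).trace = 0) ∧ (∀ t : ℝ, B t = 0) ∧ (∀ t : ℝ, R t = 0) := by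
  have htrace_ode : ∀ t, (B' t).trace = -((B t)ᵀ * B t).trace - (R t).trace := fun t => by
    have := congrArg trace (hode t)
    rw [trace_add, trace_add, trace_zero] at this
    nth_rw 1 [← hBsym t] at this
    linarith
  have hB_trace : ∀ t, HasDerivAt (fun s => (B s).trace) (B' t).trace t :=
    fun t => hasDerivAt_trace fun i => hB t i i
  have htrB : ∀ t, (B t).trace = 0 := eq_zero_of_mul_hasDerivAt_le_neg_sq k.cast_nonneg hB_trace
    fun t => by
      have := (B t).sq_trace_le_card_mul_trace_transpose_mul_self
      rw [Fintype.card_fin] at this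
      nlinarith [htrace_ode t, htrR t, k.cast_nonneg (α := ℝ)]
  have hBzero : ∀ t, B t = 0 := fun t => by
    have : (B' t).trace = 0 := by rw [← (hB_trace t).deriv]; simp [htrB]
    rw [← trace_transpose_mul_self_eq_zero_iff]
    linarith [htrace_ode t, htrR t, (B t).trace_transpose_mul_self_nonneg]
  have hB'zero : ∀ t, B' t = 0 := fun t => by
    ext i j
    rw [← (hB t i j).deriv]
    simp [hBzero]
  exact ⟨htrB, hBzero, fun t => by simpa [hBzero t, hB'zero t] using hode t⟩

/-- Lemma 3.9 / Proposition 3.5 (algebraic core): a globally defined symmetric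
solution of the matrix Riccati equation B' + B² + R = 0 with tr R ≥ 0 must
satisfy tr B ≡ 0, B ≡ 0, and hence R ≡ 0. -/
theorem stmt_6 (k : ℕ) (hk : 0 < k) (B B' R : ℝ → Matrix (Fin k) (Fin k) ℝ)
    (hB : ∀ t : ℝ, ∀ i j, HasDerivAt (fun s => B s i j) (B' t i j) t)
    (hBsym : ∀ t : ℝ, (B t)ᵀ = B t)
    (hRsym : ∀ t : ℝ, (R t)ᵀ = R t)
    (hRcont : ∀ i j, Continuous fun t => R t i j)
    (hode : ∀ t : ℝ, B' t + B t * B t + R t = 0)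
    (htrR : ∀ t : ℝ, 0 ≤ (R t).trace) :
    (∀ t : ℝ, (B t).trace = 0) ∧ (∀ t : ℝ, B t = 0) ∧ (∀ t : ℝ, R t = 0) :=
  stmt_6_general k B B' R hB hBsym hode htrR
end

section
/- Let R : [t₁,∞) → Matrix (Fin k) (Fin k) ℝ be continuous and symmetric-valued, and let A be the solution of A'' + RA = 0 with A(t₁) = 0, A'(t₁) = I. Assume A(t) is invertible for all t > t₁ (no conjugate points). For s > t₁, define D_s(t) = A(t) ∫_t^s (A(τ)ᵀ A(τ))⁻¹ dτ for t ∈ (t₁, s]. Then D_s solves D_s'' + R D_s = 0, D_s(s) = 0, lim_{t→t₁⁺} D_s(t) = I, and D_s(t) is invertible for t ∈ (t₁, s). -/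
/-!
Put `G = (AᵀA)⁻¹` and `M(t) = ∫ₜˢ G`, so that `D = A M` and `M' = -G`. Since `A G = (Aᵀ)⁻¹`,
`D' = A' M - (Aᵀ)⁻¹`. As `R` is symmetric, the Wronskian `AᵀA' - A'ᵀA` has derivative zero,
and it vanishes at `t₁`; hence `(Aᵀ)⁻¹ A'ᵀ = A' A⁻¹`, so `((Aᵀ)⁻¹)' = -A' G` and
`D'' = A'' M = -R D`.

The quadratic forms of `M` have derivative `-xᵀ G x < 0` and vanish at `s`, so `M(t)` is
positive definite for `t < s`, and `D(t)` is invertible.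

Near `t₁`, `A(t) ≈ (t - t₁) I` and `(τ - t₁)² G(τ) → I`. If `(τ - a)² g(τ) → c`, then comparing
`g` with `c / (τ - a)²` gives `(t - a) ∫ₜˢ g → c`. Hence `D(t) → I`.
-/

open Matrix Set Filter Topology

section MatrixCalculus

theorem tendsto_matrix_iff {ι m n : Type*} {F : ι → Matrix m n ℝ} {l : Filter ι}
    {C : Matrix m n ℝ} :
    Tendsto F l (𝓝 C) ↔ ∀ i j, Tendsto (fun u => F u i j) l (𝓝 (C i j)) :=
  tendsto_pi_nhds.trans (forall_congr' fun _ => tendsto_pi_nhds)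

variable {n : Type*} [Fintype n]

theorem hasDerivAt_matrix_iff {F : ℝ → Matrix n n ℝ} {F' : Matrix n n ℝ} {t : ℝ} :
    HasDerivAt F F' t ↔ ∀ i j, HasDerivAt (fun u => F u i j) (F' i j) t :=
  hasDerivAt_pi.trans (forall_congr' fun _ => hasDerivAt_pi)

theorem HasDerivAt.matrix_transpose {F : ℝ → Matrix n n ℝ} {F' : Matrix n n ℝ} {t : ℝ}
    (h : HasDerivAt F F' t) : HasDerivAt (fun u => (F u)ᵀ) F'ᵀ t :=
  hasDerivAt_matrix_iff.2 fun i j => hasDerivAt_matrix_iff.1 h j i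

theorem HasDerivAt.dotProduct_mulVec {F : ℝ → Matrix n n ℝ} {F' : Matrix n n ℝ} {t : ℝ}
    (h : HasDerivAt F F' t) (x y : n → ℝ) :
    HasDerivAt (fun u => x ⬝ᵥ F u *ᵥ y) (x ⬝ᵥ F' *ᵥ y) t :=
  HasDerivAt.fun_sum fun i _ => (HasDerivAt.fun_sum fun j _ =>
    (hasDerivAt_matrix_iff.1 h i j).mul_const (y j)).const_mul (x i)

/- `HasDerivAt` and `Tendsto` only see the topology of `Matrix n n ℝ`, which is the same for every
norm; the operator norm supplies the normed-algebra structure needed by the calculus lemmas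
below. -/
open scoped Matrix.Norms.Operator in
theorem tendsto_inv_sub_smul_of_hasDerivAt {A : ℝ → Matrix n n ℝ} {A₀' : Matrix n n ℝ}
    {a : ℝ} (hA : HasDerivAt A A₀' a) (h0 : A a = 0) :
    Tendsto (fun τ => (τ - a)⁻¹ • A τ) (𝓝[>] a) (𝓝 A₀') := by
  have : Tendsto (slope A a) (𝓝[>] a) (𝓝 A₀') :=
    (hasDerivAt_iff_tendsto_slope.1 hA).mono_left (nhdsWithin_mono a fun _ h => ne_of_gt h)
  exact this.congr fun τ => by rw [slope_def_module, h0, sub_zero]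

variable [DecidableEq n]

open scoped Matrix.Norms.Operator in
theorem HasDerivAt.matrix_inv {F : ℝ → Matrix n n ℝ} {F' : Matrix n n ℝ} {t : ℝ}
    (h : HasDerivAt F F' t) (hF : IsUnit (F t).det) :
    HasDerivAt (fun u => (F u)⁻¹) (-((F t)⁻¹ * F' * (F t)⁻¹)) t := by
  obtain ⟨u, hu⟩ := (isUnit_iff_isUnit_det _).2 hF
  have hinv : HasFDerivAt Ring.inverse _ (F t) := hu ▸ hasFDerivAt_ringInverse (𝕜 := ℝ) u
  have := hinv.comp_hasDerivAt t h
  rw [_root_.neg_apply, ContinuousLinearMap.mulLeftRight_apply, ← Ring.inverse_unit, hu] at this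
  simp only [nonsing_inv_eq_ringInverse]
  exact this

theorem det_ne_zero_of_dotProduct_mulVec_pos {M : Matrix n n ℝ}
    (h : ∀ x ≠ 0, 0 < x ⬝ᵥ M *ᵥ x) : M.det ≠ 0 := by
  intro hdet
  obtain ⟨x, hx, hMx⟩ := exists_mulVec_eq_zero_iff.2 hdet
  simpa [hMx] using h x hx

theorem posDef_transpose_mul_self_inv {A : Matrix n n ℝ} (hA : IsUnit A.det) :
    ((Aᵀ * A)⁻¹).PosDef := by
  have := PosDef.conjTranspose_mul_self A
    (mulVec_injective_iff_isUnit.2 ((isUnit_iff_isUnit_det A).2 hA))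
  rw [conjTranspose_eq_transpose_of_trivial] at this
  exact this.inv

theorem inv_transpose_mul_transpose_mul_inv_transpose {α : Type*} [CommRing α]
    {A B : Matrix n n α} (hA : IsUnit A.det) (hAB : Aᵀ * B = Bᵀ * A) :
    (Aᵀ)⁻¹ * Bᵀ * (Aᵀ)⁻¹ = B * (Aᵀ * A)⁻¹ := by
  have hAt : IsUnit Aᵀ.det := by rwa [det_transpose]
  calc (Aᵀ)⁻¹ * Bᵀ * (Aᵀ)⁻¹ = (Aᵀ)⁻¹ * (Bᵀ * A) * A⁻¹ * (Aᵀ)⁻¹ := by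
        rw [Matrix.mul_assoc (Aᵀ)⁻¹ (Bᵀ * A), Matrix.mul_assoc Bᵀ, mul_nonsing_inv _ hA,
          Matrix.mul_one]
    _ = B * (Aᵀ * A)⁻¹ := by
        rw [← hAB, ← Matrix.mul_assoc, nonsing_inv_mul _ hAt, Matrix.one_mul,
          Matrix.mul_inv_rev, Matrix.mul_assoc]

end MatrixCalculus

section SingularIntegral

theorem uIcc_subset_Ioi {a t t₀ : ℝ} (ht : a < t) (ht₀ : a < t₀) : uIcc t t₀ ⊆ Ioi a :=
  fun _ hx => (lt_min ht ht₀).trans_le hx.1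

theorem continuousOn_inv_sub_sq (a : ℝ) : ContinuousOn (fun τ => ((τ - a) ^ 2)⁻¹) (Ioi a) :=
  ((continuousOn_id.sub continuousOn_const).pow 2).inv₀ fun _ hx =>
    (pow_pos (sub_pos.2 hx) 2).ne'

theorem integral_inv_sub_sq {a t t₀ : ℝ} (ht : a < t) (ht₀ : a < t₀) :
    ∫ τ in t..t₀, ((τ - a) ^ 2)⁻¹ = (t - a)⁻¹ - (t₀ - a)⁻¹ := by
  have hderiv : ∀ x ∈ uIcc t t₀, HasDerivAt (fun y => -(y - a)⁻¹) ((x - a) ^ 2)⁻¹ x := by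
    intro x hx
    refine ((((hasDerivAt_id' x).sub_const a).inv ?_).fun_neg).congr_deriv (by ring)
    exact (sub_pos.2 (uIcc_subset_Ioi ht ht₀ hx)).ne'
  rw [intervalIntegral.integral_eq_sub_of_hasDerivAt hderiv
    ((continuousOn_inv_sub_sq a).mono (uIcc_subset_Ioi ht ht₀)).intervalIntegrable]
  ring

theorem eventually_lt_sub_mul_integral {g : ℝ → ℝ} {a s c c' : ℝ}
    (hg : ContinuousOn g (Ioi a)) (hs : a < s) (hc : ∀ᶠ τ in 𝓝[>] a, c ≤ (τ - a) ^ 2 * g τ)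
    (hc' : c' < c) :
    ∀ᶠ t in 𝓝[>] a, c' < (t - a) * ∫ τ in t..s, g τ := by
  obtain ⟨t₀, ht₀, hbound⟩ := mem_nhdsGT_iff_exists_Ioc_subset.1 hc
  have hint : ∀ x y, a < x → a < y → IntervalIntegrable g MeasureTheory.volume x y :=
    fun x y hx hy => (hg.mono (uIcc_subset_Ioi hx hy)).intervalIntegrable
  set K := c * (t₀ - a)⁻¹ - ∫ τ in t₀..s, g τ
  have hlower : ∀ t ∈ Ioo a t₀, c - (t - a) * K ≤ (t - a) * ∫ τ in t..s, g τ := by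
    intro t ⟨hat, htt₀⟩
    have hφ : ContinuousOn (fun τ => c * ((τ - a) ^ 2)⁻¹) (uIcc t t₀) :=
      continuousOn_const.mul ((continuousOn_inv_sub_sq a).mono (uIcc_subset_Ioi hat ht₀))
    have hmono : c * ((t - a)⁻¹ - (t₀ - a)⁻¹) ≤ ∫ τ in t..t₀, g τ := by
      rw [← integral_inv_sub_sq hat ht₀, ← intervalIntegral.integral_const_mul]
      refine intervalIntegral.integral_mono_on htt₀.le hφ.intervalIntegrable
        (hint t t₀ hat ht₀) ?_
      intro τ hτ
      have hτa : 0 < (τ - a) ^ 2 := pow_pos (sub_pos.2 (hat.trans_le hτ.1)) 2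
      rw [← div_eq_mul_inv, div_le_iff₀ hτa, mul_comm]
      exact hbound ⟨hat.trans_le hτ.1, hτ.2⟩
    rw [← intervalIntegral.integral_add_adjacent_intervals (hint t t₀ hat ht₀)
      (hint t₀ s ht₀ hs)]
    calc c - (t - a) * K
        = (t - a) * (c * ((t - a)⁻¹ - (t₀ - a)⁻¹) + ∫ τ in t₀..s, g τ) := by
          field_simp
          ring
      _ ≤ _ := by gcongr
  have hlim : Tendsto (fun t => c - (t - a) * K) (𝓝[>] a) (𝓝 c) := by
    have : Tendsto (fun t => c - (t - a) * K) (𝓝 a) (𝓝 (c - (a - a) * K)) :=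
      (continuous_const.sub ((continuous_id.sub continuous_const).mul continuous_const)).tendsto a
    simpa using this.mono_left nhdsWithin_le_nhds
  filter_upwards [hlim.eventually (lt_mem_nhds hc'), Ioo_mem_nhdsGT ht₀] with t h1 h2
  exact h1.trans_le (hlower t h2)

theorem tendsto_sub_mul_integral_of_tendsto_sq_mul {g : ℝ → ℝ} {a s c : ℝ}
    (hg : ContinuousOn g (Ioi a)) (hs : a < s)
    (hlim : Tendsto (fun τ => (τ - a) ^ 2 * g τ) (𝓝[>] a) (𝓝 c)) :
    Tendsto (fun t => (t - a) * ∫ τ in t..s, g τ) (𝓝[>] a) (𝓝 c) := by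
  refine tendsto_order.2 ⟨fun c' hc' => ?_, fun c' hc' => ?_⟩
  · obtain ⟨c'', hc'c'', hc''⟩ := exists_between hc'
    exact eventually_lt_sub_mul_integral hg hs
      ((hlim.eventually (lt_mem_nhds hc'')).mono fun _ => le_of_lt) hc'c''
  · obtain ⟨c'', hc'', hc''c'⟩ := exists_between hc'
    -- the upper bound is the lower bound for `-g`
    have hneg := eventually_lt_sub_mul_integral (g := fun τ => -g τ) (c := -c'') hg.neg hs
      ((hlim.eventually (gt_mem_nhds hc'')).mono fun τ h => by linarith) (neg_lt_neg hc''c')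
    filter_upwards [hneg] with t ht
    rw [intervalIntegral.integral_neg] at ht
    linarith

end SingularIntegral

section EntrywiseIntegral

variable {n : Type*}

noncomputable def entrywiseIntegral (G : ℝ → Matrix n n ℝ) (t s : ℝ) : Matrix n n ℝ :=
  of fun i j => ∫ τ in t..s, G τ i j

theorem entrywiseIntegral_self (G : ℝ → Matrix n n ℝ) (s : ℝ) :
    entrywiseIntegral G s s = 0 := by
  ext
  simp [entrywiseIntegral]

theorem ContinuousOn.matrix_elem {G : ℝ → Matrix n n ℝ} {S : Set ℝ} (hG : ContinuousOn G S)
    (i j : n) : ContinuousOn (fun τ => G τ i j) S :=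
  continuousOn_pi.1 (continuousOn_pi.1 hG i) j

theorem hasDerivAt_entrywiseIntegral_left [Fintype n] {G : ℝ → Matrix n n ℝ} {a t s : ℝ}
    (hG : ContinuousOn G (Ioi a)) (ht : a < t) (hs : a < s) :
    HasDerivAt (fun u => entrywiseIntegral G u s) (-G t) t := by
  refine hasDerivAt_matrix_iff.2 fun i j => ?_
  have hGij := hG.matrix_elem i j
  exact intervalIntegral.integral_hasDerivAt_left
    ((hGij.mono (uIcc_subset_Ioi ht hs)).intervalIntegrable)
    (hGij.stronglyMeasurableAtFilter isOpen_Ioi t ht) (hGij.continuousAt (Ioi_mem_nhds ht))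

theorem tendsto_sub_smul_entrywiseIntegral {G : ℝ → Matrix n n ℝ} {a s : ℝ}
    {C : Matrix n n ℝ} (hG : ContinuousOn G (Ioi a)) (hs : a < s)
    (hlim : Tendsto (fun τ => (τ - a) ^ 2 • G τ) (𝓝[>] a) (𝓝 C)) :
    Tendsto (fun t => (t - a) • entrywiseIntegral G t s) (𝓝[>] a) (𝓝 C) :=
  tendsto_matrix_iff.2 fun i j => tendsto_sub_mul_integral_of_tendsto_sq_mul
    (hG.matrix_elem i j) hs (tendsto_matrix_iff.1 hlim i j)

theorem dotProduct_entrywiseIntegral_mulVec_pos [Fintype n] {G : ℝ → Matrix n n ℝ}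
    {a t s : ℝ} (hG : ContinuousOn G (Ioi a)) (hpos : ∀ τ ∈ Ioi a, (G τ).PosDef) (ht : a < t)
    (hts : t < s) {x : n → ℝ} (hx : x ≠ 0) : 0 < x ⬝ᵥ entrywiseIntegral G t s *ᵥ x := by
  have hderiv : ∀ u ∈ Ioi a, HasDerivAt (fun u => x ⬝ᵥ entrywiseIntegral G u s *ᵥ x)
      (-(x ⬝ᵥ G u *ᵥ x)) u := fun u hu => by
    simpa [neg_mulVec] using
      (hasDerivAt_entrywiseIntegral_left hG hu (ht.trans hts)).dotProduct_mulVec x x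
  have hanti : StrictAntiOn (fun u => x ⬝ᵥ entrywiseIntegral G u s *ᵥ x) (Ioi a) := by
    refine strictAntiOn_of_deriv_neg (convex_Ioi a)
      (fun u hu => (hderiv u hu).continuousAt.continuousWithinAt) fun u hu => ?_
    rw [interior_Ioi] at hu
    simpa [(hderiv u hu).deriv] using (hpos u hu).dotProduct_mulVec_pos hx
  simpa [entrywiseIntegral_self] using hanti ht (ht.trans hts) hts

end EntrywiseIntegral

section JacobiEquation

open scoped Matrix.Norms.Operator

variable {n : Type*} [Fintype n] [DecidableEq n]

theorem transpose_mul_deriv_symm_of_jacobi {R A A' A'' : ℝ → Matrix n n ℝ} {t₁ t : ℝ}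
    (hRsym : ∀ t ∈ Ici t₁, (R t)ᵀ = R t) (hA : ∀ t ∈ Ici t₁, HasDerivAt A (A' t) t)
    (hA' : ∀ t ∈ Ici t₁, HasDerivAt A' (A'' t) t)
    (hode : ∀ t ∈ Ici t₁, A'' t + R t * A t = 0) (h0 : A t₁ = 0) (ht : t₁ ≤ t) :
    (A t)ᵀ * A' t = (A' t)ᵀ * A t := by
  set W := fun u => (A u)ᵀ * A' u - (A' u)ᵀ * A u
  have hW : ∀ u ∈ Ici t₁, HasDerivAt W 0 u := by
    intro u hu
    refine (((hA u hu).matrix_transpose.mul (hA' u hu)).sub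
      ((hA' u hu).matrix_transpose.mul (hA u hu))).congr_deriv ?_
    rw [eq_neg_of_add_eq_zero_left (hode u hu), transpose_neg, transpose_mul, hRsym u hu]
    noncomm_ring
  have := constant_of_has_deriv_right_zero
    (fun u hu => (hW u hu.1).continuousAt.continuousWithinAt)
    (fun u hu => (hW u hu.1).hasDerivWithinAt) t ⟨ht, le_rfl⟩
  simpa [W, h0, sub_eq_zero] using this

theorem hasDerivAt_inv_transpose_of_symm {A : ℝ → Matrix n n ℝ} {A₀' : Matrix n n ℝ}
    {t : ℝ} (hA : HasDerivAt A A₀' t) (hdet : IsUnit (A t).det) (hW : (A t)ᵀ * A₀' = A₀'ᵀ * A t) :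
    HasDerivAt (fun u => ((A u)ᵀ)⁻¹) (-(A₀' * ((A t)ᵀ * A t)⁻¹)) t := by
  have := hA.matrix_transpose.matrix_inv (by rwa [det_transpose])
  rwa [inv_transpose_mul_transpose_mul_inv_transpose hdet hW] at this

theorem tendsto_sq_smul_inv_transpose_mul_self {A : ℝ → Matrix n n ℝ} {a : ℝ}
    (hA : HasDerivAt A 1 a) (h0 : A a = 0) (hdet : ∀ τ ∈ Ioi a, IsUnit (A τ).det) :
    Tendsto (fun τ => (τ - a) ^ 2 • ((A τ)ᵀ * A τ)⁻¹) (𝓝[>] a) (𝓝 1) := by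
  have hB := tendsto_inv_sub_smul_of_hasDerivAt hA h0
  have hgram :
      Tendsto (fun τ => (((τ - a)⁻¹ • A τ)ᵀ * ((τ - a)⁻¹ • A τ))⁻¹) (𝓝[>] a) (𝓝 1) := by
    have h : Tendsto (fun τ => ((τ - a)⁻¹ • A τ)ᵀ * ((τ - a)⁻¹ • A τ)) (𝓝[>] a) (𝓝 1) := by
      simpa only [Function.comp_def, id, transpose_one, Matrix.one_mul] using
        ((continuous_id.matrix_transpose.tendsto 1).comp hB).mul hB
    rw [← inv_one]
    exact (continuousAt_matrix_inv 1 (by simp)).tendsto.comp h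
  refine hgram.congr' ?_
  filter_upwards [self_mem_nhdsWithin] with τ hτ
  have hτa : τ - a ≠ 0 := (sub_pos.2 hτ).ne'
  have hAA : IsUnit ((A τ)ᵀ * A τ).det := by
    rw [det_mul, det_transpose]; exact (hdet τ hτ).mul (hdet τ hτ)
  refine inv_eq_left_inv ?_
  rw [transpose_smul, smul_mul_smul_comm, smul_mul_smul_comm, nonsing_inv_mul _ hAA,
    ← sq, ← mul_pow, mul_inv_cancel₀ hτa, one_pow, one_smul]

theorem continuousAt_inv_transpose_mul_self {A : ℝ → Matrix n n ℝ} {A₀' : Matrix n n ℝ}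
    {t : ℝ} (hA : HasDerivAt A A₀' t) (hdet : IsUnit (A t).det) :
    ContinuousAt (fun u => ((A u)ᵀ * A u)⁻¹) t :=
  ((hA.matrix_transpose.mul hA).matrix_inv (by simpa using hdet.mul hdet)).continuousAt

theorem hasDerivAt_jacobi_field {A M : ℝ → Matrix n n ℝ} {A₀' : Matrix n n ℝ} {t : ℝ}
    (hA : HasDerivAt A A₀' t)
    (hM : HasDerivAt M (-((A t)ᵀ * A t)⁻¹) t) (hdet : IsUnit (A t).det) :
    HasDerivAt (fun u => A u * M u) (A₀' * M t - ((A t)ᵀ)⁻¹) t := by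
  have hAG : A t * ((A t)ᵀ * A t)⁻¹ = ((A t)ᵀ)⁻¹ := by
    rw [Matrix.mul_inv_rev, ← Matrix.mul_assoc, mul_nonsing_inv _ hdet, Matrix.one_mul]
  refine (hA.mul hM).congr_deriv ?_
  rw [Matrix.mul_neg, hAG, sub_eq_add_neg]

theorem hasDerivAt_deriv_jacobi_field {A A' M : ℝ → Matrix n n ℝ} {A₀'' R₀ : Matrix n n ℝ}
    {t : ℝ} (hA : HasDerivAt A (A' t) t) (hA' : HasDerivAt A' A₀'' t)
    (hM : HasDerivAt M (-((A t)ᵀ * A t)⁻¹) t) (hdet : IsUnit (A t).det)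
    (hW : (A t)ᵀ * A' t = (A' t)ᵀ * A t) (hode : A₀'' + R₀ * A t = 0) :
    HasDerivAt (fun u => A' u * M u - ((A u)ᵀ)⁻¹) (-(R₀ * (A t * M t))) t := by
  refine ((hA'.mul hM).sub (hasDerivAt_inv_transpose_of_symm hA hdet hW)).congr_deriv ?_
  rw [eq_neg_of_add_eq_zero_left hode]
  noncomm_ring

theorem tendsto_mul_entrywiseIntegral_inv_transpose_mul_self {A : ℝ → Matrix n n ℝ} {a s : ℝ}
    (hA : HasDerivAt A 1 a) (h0 : A a = 0) (hdet : ∀ τ ∈ Ioi a, IsUnit (A τ).det)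
    (hG : ContinuousOn (fun τ => ((A τ)ᵀ * A τ)⁻¹) (Ioi a)) (hs : a < s) :
    Tendsto (fun t => A t * entrywiseIntegral (fun τ => ((A τ)ᵀ * A τ)⁻¹) t s) (𝓝[>] a) (𝓝 1) := by
  have h := (tendsto_inv_sub_smul_of_hasDerivAt hA h0).mul
    (tendsto_sub_smul_entrywiseIntegral hG hs (tendsto_sq_smul_inv_transpose_mul_self hA h0 hdet))
  rw [Matrix.one_mul] at h
  refine h.congr' ?_
  filter_upwards [self_mem_nhdsWithin] with t ht
  rw [smul_mul_smul_comm, inv_mul_cancel₀ (sub_pos.2 ht).ne', one_smul]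

end JacobiEquation

theorem stmt_10_general (k : ℕ) (t₁ : ℝ)
    (R A A' A'' : ℝ → Matrix (Fin k) (Fin k) ℝ)
    (hRsym : ∀ t ∈ Ici t₁, (R t)ᵀ = R t)
    (hA : ∀ t ∈ Ici t₁, ∀ i j, HasDerivAt (fun s => A s i j) (A' t i j) t)
    (hA' : ∀ t ∈ Ici t₁, ∀ i j, HasDerivAt (fun s => A' s i j) (A'' t i j) t)
    (hode : ∀ t ∈ Ici t₁, A'' t + R t * A t = 0)
    (hinit0 : A t₁ = 0) (hinit1 : A' t₁ = 1)
    (hnoconj : ∀ t, t₁ < t → IsUnit (A t).det)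
    (s : ℝ) (hs : t₁ < s)
    (D : ℝ → Matrix (Fin k) (Fin k) ℝ)
    (hD : ∀ t : ℝ, D t = A t * Matrix.of fun i j => ∫ τ in t..s, ((A τ)ᵀ * A τ)⁻¹ i j) :
    D s = 0 ∧
    (∀ t ∈ Ioo t₁ s, IsUnit (D t).det) ∧
    (∀ i j, Filter.Tendsto (fun t => D t i j) (nhdsWithin t₁ (Ioi t₁))
      (nhds ((1 : Matrix (Fin k) (Fin k) ℝ) i j))) ∧
    ∃ D' : ℝ → Matrix (Fin k) (Fin k) ℝ,
      (∀ t ∈ Ioo t₁ s, ∀ i j, HasDerivAt (fun u => D u i j) (D' t i j) t) ∧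
      (∀ t ∈ Ioo t₁ s, ∀ i j, HasDerivAt (fun u => D' u i j) ((-(R t * D t)) i j) t) := by
  replace hA : ∀ t ∈ Ici t₁, HasDerivAt A (A' t) t := fun t ht => hasDerivAt_matrix_iff.2 (hA t ht)
  replace hA' : ∀ t ∈ Ici t₁, HasDerivAt A' (A'' t) t :=
    fun t ht => hasDerivAt_matrix_iff.2 (hA' t ht)
  set G := fun τ => ((A τ)ᵀ * A τ)⁻¹
  have hG : ContinuousOn G (Ioi t₁) := fun τ hτ => (continuousAt_inv_transpose_mul_self
    (hA τ (Ioi_subset_Ici_self hτ)) (hnoconj τ hτ)).continuousWithinAt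
  have hM : ∀ t ∈ Ioi t₁, HasDerivAt (fun u => entrywiseIntegral G u s) (-G t) t :=
    fun t ht => hasDerivAt_entrywiseIntegral_left hG ht hs
  obtain rfl : D = fun t => A t * entrywiseIntegral G t s := funext hD
  refine ⟨by simp [entrywiseIntegral_self], fun t ht => ?_,
    tendsto_matrix_iff.1 (tendsto_mul_entrywiseIntegral_inv_transpose_mul_self
      (hinit1 ▸ hA t₁ self_mem_Ici) hinit0 hnoconj hG hs),
    fun t => A' t * entrywiseIntegral G t s - ((A t)ᵀ)⁻¹,
    fun t ht => hasDerivAt_matrix_iff.1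
      (hasDerivAt_jacobi_field (hA t ht.1.le) (hM t ht.1) (hnoconj t ht.1)),
    fun t ht => hasDerivAt_matrix_iff.1 (hasDerivAt_deriv_jacobi_field (hA t ht.1.le)
      (hA' t ht.1.le) (hM t ht.1) (hnoconj t ht.1)
      (transpose_mul_deriv_symm_of_jacobi hRsym hA hA' hode hinit0 ht.1.le) (hode t ht.1.le))⟩
  rw [det_mul]
  refine (hnoconj t ht.1).mul (det_ne_zero_of_dotProduct_mulVec_pos fun x hx => ?_).isUnit
  exact dotProduct_entrywiseIntegral_mulVec_pos hG
    (fun τ hτ => posDef_transpose_mul_self_inv (hnoconj τ hτ)) ht.1 ht.2 hx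

/-- Lemma 3.7 ([BEE, Lemma 12.12]): if A solves A'' + RA = 0 with A(t₁) = 0,
A'(t₁) = I and A(t) is invertible for t > t₁, then for s > t₁ the field
D_s(t) = A(t)·∫ₜˢ (AᵀA)⁻¹ solves the Jacobi equation, vanishes at s, tends to
the identity as t → t₁⁺, and is invertible on (t₁, s). -/
theorem stmt_10 (k : ℕ) (t₁ : ℝ)
    (R A A' A'' : ℝ → Matrix (Fin k) (Fin k) ℝ)
    (hRcont : ∀ i j, ContinuousOn (fun t => R t i j) (Ici t₁))
    (hRsym : ∀ t ∈ Ici t₁, (R t)ᵀ = R t)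
    (hA : ∀ t ∈ Ici t₁, ∀ i j, HasDerivAt (fun s => A s i j) (A' t i j) t)
    (hA' : ∀ t ∈ Ici t₁, ∀ i j, HasDerivAt (fun s => A' s i j) (A'' t i j) t)
    (hode : ∀ t ∈ Ici t₁, A'' t + R t * A t = 0)
    (hinit0 : A t₁ = 0) (hinit1 : A' t₁ = 1)
    (hnoconj : ∀ t, t₁ < t → IsUnit (A t).det)
    (s : ℝ) (hs : t₁ < s)
    (D : ℝ → Matrix (Fin k) (Fin k) ℝ)
    (hD : ∀ t : ℝ, D t = A t * Matrix.of fun i j => ∫ τ in t..s, ((A τ)ᵀ * A τ)⁻¹ i j) :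
    D s = 0 ∧
    (∀ t ∈ Ioo t₁ s, IsUnit (D t).det) ∧
    (∀ i j, Filter.Tendsto (fun t => D t i j) (nhdsWithin t₁ (Ioi t₁))
      (nhds ((1 : Matrix (Fin k) (Fin k) ℝ) i j))) ∧
    ∃ D' : ℝ → Matrix (Fin k) (Fin k) ℝ,
      (∀ t ∈ Ioo t₁ s, ∀ i j, HasDerivAt (fun u => D u i j) (D' t i j) t) ∧
      (∀ t ∈ Ioo t₁ s, ∀ i j, HasDerivAt (fun u => D' u i j) ((-(R t * D t)) i j) t) :=
  stmt_10_general k t₁ R A A' A'' hRsym hA hA' hode hinit0 hinit1 hnoconj s hs D hD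
end

section
/- Let θ : [t₁, ∞) → ℝ be differentiable, θ ≤ θ(t₁) < 0 non-increasing in the sense θ' ≤ 0, and satisfy θ'(t) ≤ −θ(t)²/(n−1) − 2θ(t) g'(t)/(n−1) with g differentiable and g ≤ k. Then for all t > t₁, 0 < −(n−1)/θ(t) ≤ (t₁ − t) − (n − 1 + 2k − 2g(t₁))/θ(t₁). -/
/-!
Put `m = n - 1`. Multiplying the Riccati inequality `m θ' ≤ -θ² - 2θg'` by `1/θ²` shows that
`Φ(t) = t + (2g(t) - m - 2k)/θ(t)` has `Φ' = 1 + (2g'θ - (2g - m - 2k)θ')/θ² ≤ 0`, because the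
leftover term `2(g - k)θ'` is nonnegative when `g ≤ k` and `θ' ≤ 0`. Hence `Φ(t) ≤ Φ(t₁)`, and
`-m/θ(t) ≤ (2g(t) - m - 2k)/θ(t) = Φ(t) - t` since `θ(t) < 0` and `g(t) ≤ k`.
-/

open Set

noncomputable def riccatiPotential (m k : ℝ) (θ g : ℝ → ℝ) (t : ℝ) : ℝ :=
  t + (2 * g t - m - 2 * k) / θ t

theorem hasDerivAt_riccatiPotential {m k t θ' g' : ℝ} {θ g : ℝ → ℝ}
    (hθ : HasDerivAt θ θ' t) (hg : HasDerivAt g g' t) (hθt : θ t ≠ 0) :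
    HasDerivAt (riccatiPotential m k θ g)
      (1 + (2 * g' * θ t - (2 * g t - m - 2 * k) * θ') / θ t ^ 2) t := by
  have hnum : HasDerivAt (fun s => 2 * g s - m - 2 * k) (2 * g') t :=
    ((hg.const_mul 2).sub_const m).sub_const (2 * k)
  exact (hasDerivAt_id t).add (hnum.div hθ hθt)

theorem riccatiPotential_deriv_nonpos {m k θ θ' g g' : ℝ} (hm : 0 < m) (hθ : θ ≠ 0)
    (hθ' : θ' ≤ 0) (hgk : g ≤ k) (hineq : θ' ≤ -θ ^ 2 / m - 2 * θ * g' / m) :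
    1 + (2 * g' * θ - (2 * g - m - 2 * k) * θ') / θ ^ 2 ≤ 0 := by
  have hθsq : 0 < θ ^ 2 := by positivity
  have hriccati : m * θ' ≤ -θ ^ 2 - 2 * θ * g' := by
    rw [← sub_div, le_div_iff₀ hm] at hineq
    linarith
  have hcorr : 0 ≤ (2 * g - 2 * k) * θ' := mul_nonneg_of_nonpos_of_nonpos (by linarith) hθ'
  have hquot : (2 * g' * θ - (2 * g - m - 2 * k) * θ') / θ ^ 2 ≤ -1 := by
    rw [div_le_iff₀ hθsq]
    linarith
  linarith

theorem antitoneOn_riccatiPotential {m k : ℝ} {D : Set ℝ} {θ θ' g g' : ℝ → ℝ}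
    (hD : Convex ℝ D) (hm : 0 < m)
    (hθ : ∀ t ∈ D, HasDerivAt θ (θ' t) t) (hg : ∀ t ∈ D, HasDerivAt g (g' t) t)
    (hθ0 : ∀ t ∈ D, θ t ≠ 0) (hθ' : ∀ t ∈ D, θ' t ≤ 0) (hgk : ∀ t ∈ D, g t ≤ k)
    (hineq : ∀ t ∈ D, θ' t ≤ -θ t ^ 2 / m - 2 * θ t * g' t / m) :
    AntitoneOn (riccatiPotential m k θ g) D := by
  have hΦ t (ht : t ∈ D) := hasDerivAt_riccatiPotential (m := m) (k := k) (hθ t ht) (hg t ht)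
    (hθ0 t ht)
  refine antitoneOn_of_hasDerivWithinAt_nonpos hD
    (fun t ht => (hΦ t ht).continuousAt.continuousWithinAt)
    (fun t ht => (hΦ t (interior_subset ht)).hasDerivWithinAt) fun t ht => ?_
  have ht := interior_subset ht
  exact riccatiPotential_deriv_nonpos hm (hθ0 t ht) (hθ' t ht) (hgk t ht) (hineq t ht)

/-- The integrated estimate in the proof of Proposition 3.4: for a nonincreasing
negative solution of the modified Riccati inequality with g ≤ k, one has
0 < −(n−1)/θ(t) ≤ (t₁ − t) − (n − 1 + 2k − 2g(t₁))/θ(t₁) for all t > t₁. -/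
theorem stmt_12 (n : ℕ) (hn : 2 ≤ n) (t₁ k : ℝ) (θ θ' g g' : ℝ → ℝ)
    (hθ : ∀ t ∈ Ici t₁, HasDerivAt θ (θ' t) t)
    (hg : ∀ t ∈ Ici t₁, HasDerivAt g (g' t) t)
    (hmono : ∀ t ∈ Ici t₁, θ' t ≤ 0)
    (hbound : ∀ t ∈ Ici t₁, θ t ≤ θ t₁)
    (hneg : θ t₁ < 0)
    (hineq : ∀ t ∈ Ici t₁,
      θ' t ≤ -θ t ^ 2 / ((n : ℝ) - 1) - 2 * θ t * g' t / ((n : ℝ) - 1))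
    (hgk : ∀ t ∈ Ici t₁, g t ≤ k) :
    ∀ t, t₁ < t →
      0 < -((n : ℝ) - 1) / θ t ∧
      -((n : ℝ) - 1) / θ t ≤ (t₁ - t) - ((n : ℝ) - 1 + 2 * k - 2 * g t₁) / θ t₁ := by
  intro t ht
  have hm : (0 : ℝ) < n - 1 := by
    have : (2 : ℝ) ≤ n := by exact_mod_cast hn
    linarith
  have hθneg s (hs : s ∈ Ici t₁) : θ s < 0 := (hbound s hs).trans_lt hneg
  have hΦ : riccatiPotential (n - 1) k θ g t ≤ riccatiPotential (n - 1) k θ g t₁ :=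
    antitoneOn_riccatiPotential (convex_Ici t₁) hm hθ hg (fun s hs => (hθneg s hs).ne) hmono hgk
      hineq self_mem_Ici ht.le ht.le
  unfold riccatiPotential at hΦ
  refine ⟨div_pos_of_neg_of_neg (by linarith) (hθneg t ht.le), ?_⟩
  calc -((n : ℝ) - 1) / θ t ≤ (2 * g t - (n - 1) - 2 * k) / θ t :=
        div_le_div_of_nonpos_of_le (hθneg t ht.le).le (by linarith [hgk t ht.le])
    _ ≤ (t₁ - t) - ((n : ℝ) - 1 + 2 * k - 2 * g t₁) / θ t₁ := by
        linear_combination hΦ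
end

section
/- Let θ, σ², ω², r : J → ℝ with θ differentiable satisfying θ' = −r − ω² − σ² − θ²/(n−1) (the Raychaudhuri equation), and let h : J → ℝ be twice differentiable. Define θ_f = θ − h' and r_f^m = r + h'' − (h')²/m for m > 0. Then θ_f' = −r_f^m − ω² − σ² − θ²/(n−1) − (h')²/m, and moreover θ_f' ≤ −r_f^m − ω² − σ² − θ_f²/(n+m−1). -/
open Set

/- The (m,f)-equation is the Raychaudhuri equation rewritten after subtracting h'' from both sides,
with the term h'²/m added to and subtracted from r. The inequality is then the two-term
Cauchy–Schwarz (Sedrakyan) bound θ_f²/((n−1)+m) ≤ θ²/(n−1) + h'²/m. -/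

theorem sq_sub_div_add_le_sq_div_add_sq_div {R : Type*} [Field R] [LinearOrder R]
    [IsStrictOrderedRing R] (a b : R) {p q : R} (hp : 0 < p) (hq : 0 < q) :
    (a - b) ^ 2 / (p + q) ≤ a ^ 2 / p + b ^ 2 / q := by
  have hpos : ∀ i ∈ Finset.univ, 0 < ![p, q] i := by
    intro i _
    fin_cases i <;> simpa
  simpa [Fin.sum_univ_two, sub_eq_add_neg] using
    Finset.sq_sum_div_le_sum_sq_div Finset.univ ![a, -b] hpos

theorem stmt_14_general (J : Set ℝ) (n : ℕ) (hn : 2 ≤ n) (m : ℝ) (hm : 0 < m)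
    (θ θ' σ2 ω2 r h' h'' : ℝ → ℝ)
    (hθ : ∀ t ∈ J, HasDerivAt θ (θ' t) t)
    (hh' : ∀ t ∈ J, HasDerivAt h' (h'' t) t)
    (hray : ∀ t ∈ J, θ' t = -r t - ω2 t - σ2 t - θ t ^ 2 / ((n : ℝ) - 1)) :
    ∀ t ∈ J,
      HasDerivAt (fun s => θ s - h' s)
        (-(r t + h'' t - h' t ^ 2 / m) - ω2 t - σ2 t
          - θ t ^ 2 / ((n : ℝ) - 1) - h' t ^ 2 / m) t ∧
      -(r t + h'' t - h' t ^ 2 / m) - ω2 t - σ2 t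
          - θ t ^ 2 / ((n : ℝ) - 1) - h' t ^ 2 / m
        ≤ -(r t + h'' t - h' t ^ 2 / m) - ω2 t - σ2 t
          - (θ t - h' t) ^ 2 / ((n : ℝ) + m - 1) := by
  intro t ht
  have hn1 : (0 : ℝ) < n - 1 := by
    have : (2 : ℝ) ≤ n := by exact_mod_cast hn
    linarith
  refine ⟨?_, ?_⟩
  · refine ((hθ t ht).sub (hh' t ht)).congr_deriv ?_
    rw [hray t ht]
    ring
  · have cauchy_schwarz := sq_sub_div_add_le_sq_div_add_sq_div (θ t) (h' t) hn1 hm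
    rw [sub_add_eq_add_sub] at cauchy_schwarz
    linarith

/-- Proposition 2.9, the (m,f)-Raychaudhuri equation in scalar form:
θ_f = θ − h' satisfies θ_f' = −r_f^m − ω² − σ² − θ²/(n−1) − h'²/m, and
θ_f' ≤ −r_f^m − ω² − σ² − θ_f²/(n+m−1). -/
theorem stmt_14 (J : Set ℝ) (n : ℕ) (hn : 2 ≤ n) (m : ℝ) (hm : 0 < m)
    (θ θ' σ2 ω2 r h h' h'' : ℝ → ℝ)
    (hθ : ∀ t ∈ J, HasDerivAt θ (θ' t) t)
    (hh : ∀ t ∈ J, HasDerivAt h (h' t) t)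
    (hh' : ∀ t ∈ J, HasDerivAt h' (h'' t) t)
    (hray : ∀ t ∈ J, θ' t = -r t - ω2 t - σ2 t - θ t ^ 2 / ((n : ℝ) - 1)) :
    ∀ t ∈ J,
      HasDerivAt (fun s => θ s - h' s)
        (-(r t + h'' t - h' t ^ 2 / m) - ω2 t - σ2 t
          - θ t ^ 2 / ((n : ℝ) - 1) - h' t ^ 2 / m) t ∧
      -(r t + h'' t - h' t ^ 2 / m) - ω2 t - σ2 t
          - θ t ^ 2 / ((n : ℝ) - 1) - h' t ^ 2 / m
        ≤ -(r t + h'' t - h' t ^ 2 / m) - ω2 t - σ2 t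
          - (θ t - h' t) ^ 2 / ((n : ℝ) + m - 1) :=
  stmt_14_general J n hn m hm θ θ' σ2 ω2 r h' h'' hθ hh' hray
end
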